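/- arXiv:math/0305136 — 2 statements merged into one kernel-verified Lean document; each statement's English description precedes it below -/
import Mathlib

section
/- Let M be a monoidal category with coequalizers preserved by the tensor product, and (Q, m, η, δ, ε) a Frobenius algebra in M (i.e. (Q,m,η) a monoid, (Q,δ,ε) a comonoid, with δ a Q-Q-bimodule map). Then {}_Q Q_U is also a right dual of {}_U Q_Q in BIM(M): the 2-cells ev_R = ε∘t : {}_U Q_Q ⊗_Q {}_Q Q_U → {}_U U_U and coev_R = δ : {}_Q Q_Q → {}_Q Q_U ⊗_U {}_U Q_Q satisfy the snake identities. Hence {}_U Q_Q is a Frobenius 1-morphism (has a two-sided dual) in BIM(M). -/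
open CategoryTheory MonoidalCategory CategoryTheory.Limits

universe v u

noncomputable section

variable {C : Type u} [Category.{v} C] [MonoidalCategory.{v} C] [HasCoequalizers C]
  [∀ X : C, PreservesColimitsOfSize.{0, 0} (tensorLeft X)]
  [∀ X : C, PreservesColimitsOfSize.{0, 0} (tensorRight X)]

variable (Q : Mon C)

/-- The `U`-`Q` bimodule `{}_U Q_Q = (Q, λ_Q, m)`. -/
def UQQ : Bimod (Mon.trivial C) Q where
  X := Q.X
  actLeft := (λ_ Q.X).hom
  actRight := (MonObj.mul (X := Q.X))
  one_actLeft := by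
    show (𝟙 (𝟙_ C)) ▷ Q.X ≫ (λ_ Q.X).hom = (λ_ Q.X).hom
    simp
  left_assoc := by
    show ((λ_ (𝟙_ C)).hom ▷ Q.X) ≫ (λ_ Q.X).hom =
      (α_ (𝟙_ C) (𝟙_ C) Q.X).hom ≫ (𝟙_ C ◁ (λ_ Q.X).hom) ≫ (λ_ Q.X).hom
    try dsimp only [Mon.trivial_X]
    monoidal_coherence
  actRight_one := MonObj.mul_one Q.X
  right_assoc := by
    rw [MonObj.mul_assoc Q.X]; simp
  middle_assoc := by
    show (λ_ Q.X).hom ▷ Q.X ≫ (MonObj.mul (X := Q.X)) = (α_ (𝟙_ C) Q.X Q.X).hom ≫ (𝟙_ C ◁ (MonObj.mul (X := Q.X))) ≫ (λ_ Q.X).hom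
    simp

/-- The `Q`-`U` bimodule `{}_Q Q_U = (Q, m, ρ_Q)`. -/
def QQU : Bimod Q (Mon.trivial C) where
  X := Q.X
  actLeft := (MonObj.mul (X := Q.X))
  actRight := (ρ_ Q.X).hom
  one_actLeft := MonObj.one_mul Q.X
  left_assoc := by rw [MonObj.mul_assoc Q.X]
  actRight_one := by
    show Q.X ◁ (𝟙 (𝟙_ C)) ≫ (ρ_ Q.X).hom = (ρ_ Q.X).hom
    simp
  right_assoc := by
    show Q.X ◁ (λ_ (𝟙_ C)).hom ≫ (ρ_ Q.X).hom =
      (α_ Q.X (𝟙_ C) (𝟙_ C)).inv ≫ ((ρ_ Q.X).hom ▷ 𝟙_ C) ≫ (ρ_ Q.X).hom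
    try dsimp only [Mon.trivial_X]
    monoidal_coherence
  middle_assoc := by
    show (MonObj.mul (X := Q.X)) ▷ 𝟙_ C ≫ (ρ_ Q.X).hom = (α_ Q.X Q.X (𝟙_ C)).hom ≫ (Q.X ◁ (ρ_ Q.X).hom) ≫ (MonObj.mul (X := Q.X))
    simp


theorem evR_wcond (δ : Q.X ⟶ Q.X ⊗ Q.X) (ε : Q.X ⟶ 𝟙_ C) :
    ((UQQ Q).actRight ▷ (QQU Q).X) ≫ ((MonObj.mul (X := Q.X)) ≫ ε) =
      ((α_ (UQQ Q).X Q.X (QQU Q).X).hom ≫ ((UQQ Q).X ◁ (QQU Q).actLeft)) ≫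
        ((MonObj.mul (X := Q.X)) ≫ ε) := by
  dsimp [QQU, UQQ]
  rw [← Category.assoc, MonObj.mul_assoc Q.X]
  simp


section Gen

/-- The canonical projection onto the tensor product of bimodules. -/
def tπ {A B D : Mon C} (P : Bimod A B) (N : Bimod B D) : P.X ⊗ N.X ⟶ (P.tensorBimod N).X :=
  coequalizer.π _ _

/-- The morphism out of the tensor product of bimodules induced by a balanced morphism. -/
def tdesc {A B D : Mon C} (P : Bimod A B) (N : Bimod B D) {Z : C} (e : P.X ⊗ N.X ⟶ Z)
    (w : (P.actRight ▷ N.X) ≫ e = ((α_ P.X B.X N.X).hom ≫ (P.X ◁ N.actLeft)) ≫ e) :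
    (P.tensorBimod N).X ⟶ Z :=
  coequalizer.desc e w

theorem tπ_desc {A B D : Mon C} (P : Bimod A B) (N : Bimod B D) {Z : C} (e : P.X ⊗ N.X ⟶ Z)
    (w : (P.actRight ▷ N.X) ≫ e = ((α_ P.X B.X N.X).hom ≫ (P.X ◁ N.actLeft)) ≫ e) :
    tπ P N ≫ tdesc P N e w = e :=
  coequalizer.π_desc e w

instance tπ_epi {A B D : Mon C} (P : Bimod A B) (N : Bimod B D) : Epi (tπ P N) :=
  inferInstanceAs (Epi (coequalizer.π _ _))

instance whiskerLeft_tπ_epi (W : C) {A B D : Mon C} (P : Bimod A B) (N : Bimod B D) :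
    Epi (W ◁ tπ P N) :=
  inferInstanceAs (Epi ((tensorLeft W).map (coequalizer.π _ _)))

instance tπ_whiskerRight_epi (W : C) {A B D : Mon C} (P : Bimod A B) (N : Bimod B D) :
    Epi (tπ P N ▷ W) :=
  inferInstanceAs (Epi ((tensorRight W).map (coequalizer.π _ _)))

theorem whiskerLeft_tπ_actLeft {A B D : Mon C} (P : Bimod A B) (N : Bimod B D) :
    (A.X ◁ tπ P N) ≫ (P.tensorBimod N).actLeft =
      (α_ A.X P.X N.X).inv ≫ (P.actLeft ▷ N.X) ≫ tπ P N :=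
  Bimod.TensorBimod.whiskerLeft_π_actLeft P N

theorem tπ_whiskerRight_actRight {A B D : Mon C} (P : Bimod A B) (N : Bimod B D) :
    (tπ P N ▷ D.X) ≫ (P.tensorBimod N).actRight =
      (α_ P.X N.X D.X).hom ≫ (P.X ◁ N.actRight) ≫ tπ P N :=
  Bimod.TensorBimod.π_tensor_id_actRight P N

theorem tπ_whiskerLeft {A B D : Mon C} (P : Bimod A B) {N₁ N₂ : Bimod B D} (f : N₁ ⟶ N₂) :
    tπ P N₁ ≫ (Bimod.whiskerLeft P f).hom = (P.X ◁ f.hom) ≫ tπ P N₂ :=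
  ι_colimMap _ WalkingParallelPair.one

theorem tπ_whiskerRight {A B D : Mon C} {M₁ M₂ : Bimod A B} (f : M₁ ⟶ M₂) (N : Bimod B D) :
    tπ M₁ N ≫ (Bimod.whiskerRight f N).hom = (f.hom ▷ N.X) ≫ tπ M₂ N :=
  ι_colimMap _ WalkingParallelPair.one

/-- The unit of a monoid, as a morphism into the regular bimodule. -/
def rη (B : Mon C) : 𝟙_ C ⟶ (Bimod.regular B).X := MonObj.one (X := B.X)

theorem rightUnitor_inv_eq {A B : Mon C} (P : Bimod A B) :
    (Bimod.rightUnitorBimod P).inv.hom =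
      (ρ_ P.X).inv ≫ (P.X ◁ rη B) ≫ tπ P (Bimod.regular B) :=
  rfl

theorem leftUnitor_inv_eq {A B : Mon C} (P : Bimod A B) :
    (Bimod.leftUnitorBimod P).inv.hom =
      (λ_ P.X).inv ≫ (rη A ▷ P.X) ≫ tπ (Bimod.regular A) P :=
  rfl

theorem tπ_rightUnitor_hom {A B : Mon C} (P : Bimod A B) :
    tπ P (Bimod.regular B) ≫ (Bimod.rightUnitorBimod P).hom.hom = P.actRight :=
  coequalizer.π_desc _ _

theorem tπ_leftUnitor_hom {A B : Mon C} (P : Bimod A B) :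
    tπ (Bimod.regular A) P ≫ (Bimod.leftUnitorBimod P).hom.hom = P.actLeft :=
  coequalizer.π_desc _ _

theorem assoc_inv_tπ {A B D E : Mon C} (P : Bimod A B) (N : Bimod B D) (L : Bimod D E) :
    (P.X ◁ tπ N L) ≫ tπ P (N.tensorBimod L) ≫ (Bimod.associatorBimod P N L).inv.hom =
      (α_ P.X N.X L.X).inv ≫ (tπ P N ▷ L.X) ≫ tπ (P.tensorBimod N) L :=
  (congrArg (fun k => (P.X ◁ tπ N L) ≫ k) (coequalizer.π_desc _ _)).trans
    (id_tensor_π_preserves_coequalizer_inv_desc _ _ _ _)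

theorem assoc_hom_tπ {A B D E : Mon C} (P : Bimod A B) (N : Bimod B D) (L : Bimod D E) :
    (tπ P N ▷ L.X) ≫ tπ (P.tensorBimod N) L ≫ (Bimod.associatorBimod P N L).hom.hom =
      (α_ P.X N.X L.X).hom ≫ (P.X ◁ tπ N L) ≫ tπ P (N.tensorBimod L) :=
  (congrArg (fun k => (tπ P N ▷ L.X) ≫ k) (coequalizer.π_desc _ _)).trans
    (π_tensor_id_preserves_coequalizer_inv_desc _ _ _ _)

/-- A bimodule morphism into the regular bimodule out of a tensor product. -/
def gEv {A B : Mon C} (P : Bimod A B) (N : Bimod B A) (e : P.X ⊗ N.X ⟶ (Bimod.regular A).X)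
    (w : (P.actRight ▷ N.X) ≫ e = ((α_ P.X B.X N.X).hom ≫ (P.X ◁ N.actLeft)) ≫ e)
    (hl : (α_ A.X P.X N.X).inv ≫ (P.actLeft ▷ N.X) ≫ e = (A.X ◁ e) ≫ (Bimod.regular A).actLeft)
    (hr : (α_ P.X N.X A.X).hom ≫ (P.X ◁ N.actRight) ≫ e = (e ▷ A.X) ≫ (Bimod.regular A).actRight) :
    P.tensorBimod N ⟶ Bimod.regular A where
  hom := tdesc P N e w
  left_act_hom := by
    refine (cancel_epi (A.X ◁ tπ P N)).1 ?_
    rw [reassoc_of% (whiskerLeft_tπ_actLeft P N), tπ_desc, ← MonoidalCategory.whiskerLeft_comp_assoc,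
      tπ_desc]
    exact hl
  right_act_hom := by
    refine (cancel_epi (tπ P N ▷ A.X)).1 ?_
    rw [reassoc_of% (tπ_whiskerRight_actRight P N), tπ_desc, ← comp_whiskerRight_assoc, tπ_desc]
    exact hr

theorem gEv_tπ {A B : Mon C} (P : Bimod A B) (N : Bimod B A) (e : P.X ⊗ N.X ⟶ (Bimod.regular A).X)
    (w : (P.actRight ▷ N.X) ≫ e = ((α_ P.X B.X N.X).hom ≫ (P.X ◁ N.actLeft)) ≫ e)
    (hl : (α_ A.X P.X N.X).inv ≫ (P.actLeft ▷ N.X) ≫ e = (A.X ◁ e) ≫ (Bimod.regular A).actLeft)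
    (hr : (α_ P.X N.X A.X).hom ≫ (P.X ◁ N.actRight) ≫ e = (e ▷ A.X) ≫ (Bimod.regular A).actRight) :
    tπ P N ≫ (gEv P N e w hl hr).hom = e :=
  tπ_desc P N e w

/-- A bimodule morphism out of the regular bimodule into a tensor product. -/
def gCoev {A B : Mon C} (P : Bimod A B) (N : Bimod B A) (c : (Bimod.regular B).X ⟶ N.X ⊗ P.X)
    (hl : (Bimod.regular B).actLeft ≫ c = (B.X ◁ c) ≫ (α_ B.X N.X P.X).inv ≫ (N.actLeft ▷ P.X))
    (hr : (Bimod.regular B).actRight ≫ c = (c ▷ B.X) ≫ (α_ N.X P.X B.X).hom ≫ (N.X ◁ P.actRight)) :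
    Bimod.regular B ⟶ N.tensorBimod P where
  hom := c ≫ tπ N P
  left_act_hom := by
    rw [MonoidalCategory.whiskerLeft_comp, Category.assoc, whiskerLeft_tπ_actLeft, reassoc_of% hl]
  right_act_hom := by
    rw [comp_whiskerRight, Category.assoc, tπ_whiskerRight_actRight, reassoc_of% hr]

/-- First snake shape. -/
theorem gsnake1 {A B : Mon C} (P : Bimod A B) (N : Bimod B A)
    (ev : P.tensorBimod N ⟶ Bimod.regular A) (coev : Bimod.regular B ⟶ N.tensorBimod P)
    (e : P.X ⊗ N.X ⟶ (Bimod.regular A).X) (c : (Bimod.regular B).X ⟶ N.X ⊗ P.X)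
    (hev : tπ P N ≫ ev.hom = e) (hcoev : coev.hom = c ≫ tπ N P)
    (h : (ρ_ P.X).inv ≫ (P.X ◁ rη B) ≫ (P.X ◁ c) ≫ (α_ P.X N.X P.X).inv ≫
      (e ▷ P.X) ≫ P.actLeft = 𝟙 P.X) :
    (Bimod.rightUnitorBimod P).inv ≫ Bimod.whiskerLeft P coev ≫
      (Bimod.associatorBimod P N P).inv ≫ Bimod.whiskerRight ev P ≫
      (Bimod.leftUnitorBimod P).hom = 𝟙 P := by
  apply Bimod.hom_ext
  simp only [Bimod.comp_hom', Bimod.id_hom']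
  rw [rightUnitor_inv_eq]
  simp only [Category.assoc]
  rw [reassoc_of% (tπ_whiskerLeft P coev), hcoev, MonoidalCategory.whiskerLeft_comp, Category.assoc,
    reassoc_of% (assoc_inv_tπ P N P), reassoc_of% (tπ_whiskerRight ev P),
    ← comp_whiskerRight_assoc, hev, tπ_leftUnitor_hom]
  exact h

/-- Second snake shape. -/
theorem gsnake2 {A B : Mon C} (M : Bimod A B) (K : Bimod B A)
    (ev : K.tensorBimod M ⟶ Bimod.regular B) (coev : Bimod.regular A ⟶ M.tensorBimod K)
    (e : K.X ⊗ M.X ⟶ (Bimod.regular B).X) (c : (Bimod.regular A).X ⟶ M.X ⊗ K.X)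
    (hev : tπ K M ≫ ev.hom = e) (hcoev : coev.hom = c ≫ tπ M K)
    (h : (λ_ M.X).inv ≫ (rη A ▷ M.X) ≫ (c ▷ M.X) ≫ (α_ M.X K.X M.X).hom ≫
      (M.X ◁ e) ≫ M.actRight = 𝟙 M.X) :
    (Bimod.leftUnitorBimod M).inv ≫ Bimod.whiskerRight coev M ≫
      (Bimod.associatorBimod M K M).hom ≫ Bimod.whiskerLeft M ev ≫
      (Bimod.rightUnitorBimod M).hom = 𝟙 M := by
  apply Bimod.hom_ext
  simp only [Bimod.comp_hom', Bimod.id_hom']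
  rw [leftUnitor_inv_eq]
  simp only [Category.assoc]
  rw [reassoc_of% (tπ_whiskerRight coev M), hcoev, comp_whiskerRight, Category.assoc,
    reassoc_of% (assoc_hom_tπ M K M), reassoc_of% (tπ_whiskerLeft M ev),
    ← MonoidalCategory.whiskerLeft_comp_assoc, hev, tπ_rightUnitor_hom]
  exact h

end Gen


/-- evR as a bimodule morphism. -/
def evRmor (δ : Q.X ⟶ Q.X ⊗ Q.X) (ε : Q.X ⟶ 𝟙_ C) :
    (UQQ Q).tensorBimod (QQU Q) ⟶ Bimod.regular (Mon.trivial C) :=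
  gEv (UQQ Q) (QQU Q) ((MonObj.mul (X := Q.X)) ≫ ε) (evR_wcond Q δ ε)
    (by
      change (α_ (𝟙_ C) Q.X Q.X).inv ≫ ((λ_ Q.X).hom ▷ Q.X) ≫ (MonObj.mul (X := Q.X)) ≫ ε =
        (𝟙_ C ◁ ((MonObj.mul (X := Q.X)) ≫ ε)) ≫ (λ_ (𝟙_ C)).hom
      simp)
    (by
      change (α_ Q.X Q.X (𝟙_ C)).hom ≫ (Q.X ◁ (ρ_ Q.X).hom) ≫ (MonObj.mul (X := Q.X)) ≫ ε =
        (((MonObj.mul (X := Q.X)) ≫ ε) ▷ 𝟙_ C) ≫ (λ_ (𝟙_ C)).hom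
      simp
      monoidal)

/-- coevR as a bimodule morphism. -/
def coevRmor (δ : Q.X ⟶ Q.X ⊗ Q.X)
    (hfrob₁ : (MonObj.mul (X := Q.X)) ≫ δ =
      (Q.X ◁ δ) ≫ (α_ Q.X Q.X Q.X).inv ≫ ((MonObj.mul (X := Q.X)) ▷ Q.X))
    (hfrob₂ : (MonObj.mul (X := Q.X)) ≫ δ =
      (δ ▷ Q.X) ≫ (α_ Q.X Q.X Q.X).hom ≫ (Q.X ◁ (MonObj.mul (X := Q.X)))) :
    Bimod.regular Q ⟶ (QQU Q).tensorBimod (UQQ Q) :=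
  gCoev (UQQ Q) (QQU Q) δ hfrob₁ hfrob₂

theorem evL_wcond : ((QQU Q).actRight ▷ (UQQ Q).X) ≫ (MonObj.mul (X := Q.X)) =
    ((α_ (QQU Q).X (Mon.trivial C).X (UQQ Q).X).hom ≫ ((QQU Q).X ◁ (UQQ Q).actLeft)) ≫
      (MonObj.mul (X := Q.X)) :=
  (congrArg (· ≫ (MonObj.mul (X := Q.X))) (MonoidalCategory.triangle Q.X Q.X)).symm

/-- evL as a bimodule morphism. -/
def evLmor : (QQU Q).tensorBimod (UQQ Q) ⟶ Bimod.regular Q :=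
  gEv (QQU Q) (UQQ Q) (MonObj.mul (X := Q.X)) (evL_wcond Q)
    (by
      change (α_ Q.X Q.X Q.X).inv ≫ ((MonObj.mul (X := Q.X)) ▷ Q.X) ≫ (MonObj.mul (X := Q.X)) =
        (Q.X ◁ (MonObj.mul (X := Q.X))) ≫ (MonObj.mul (X := Q.X))
      rw [MonObj.mul_assoc_flip])
    (by
      change (α_ Q.X Q.X Q.X).hom ≫ (Q.X ◁ (MonObj.mul (X := Q.X))) ≫ (MonObj.mul (X := Q.X)) =
        ((MonObj.mul (X := Q.X)) ▷ Q.X) ≫ (MonObj.mul (X := Q.X))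
      rw [MonObj.mul_assoc])

/-- The underlying morphism of coevL. -/
def cL : 𝟙_ C ⟶ Q.X ⊗ Q.X :=
  (MonObj.one (X := Q.X)) ≫ (λ_ Q.X).inv ≫ ((MonObj.one (X := Q.X)) ▷ Q.X)

/-- coevL as a bimodule morphism. -/
def coevLmor : Bimod.regular (Mon.trivial C) ⟶ (UQQ Q).tensorBimod (QQU Q) :=
  gCoev (QQU Q) (UQQ Q) (cL Q)
    (by
      change (λ_ (𝟙_ C)).hom ≫ cL Q = (𝟙_ C ◁ cL Q) ≫ (α_ (𝟙_ C) Q.X Q.X).inv ≫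
        ((λ_ Q.X).hom ▷ Q.X)
      simp)
    (by
      change (λ_ (𝟙_ C)).hom ≫ cL Q = (cL Q ▷ 𝟙_ C) ≫ (α_ Q.X Q.X (𝟙_ C)).hom ≫
        (Q.X ◁ (ρ_ Q.X).hom)
      simp
      monoidal)

theorem snake1 (δ : Q.X ⟶ Q.X ⊗ Q.X) (ε : Q.X ⟶ 𝟙_ C)
    (hcounit₁ : δ ≫ (ε ▷ Q.X) ≫ (λ_ Q.X).hom = 𝟙 Q.X)
    (hfrob₁ : (MonObj.mul (X := Q.X)) ≫ δ =
      (Q.X ◁ δ) ≫ (α_ Q.X Q.X Q.X).inv ≫ ((MonObj.mul (X := Q.X)) ▷ Q.X))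
    (hfrob₂ : (MonObj.mul (X := Q.X)) ≫ δ =
      (δ ▷ Q.X) ≫ (α_ Q.X Q.X Q.X).hom ≫ (Q.X ◁ (MonObj.mul (X := Q.X)))) :
    (Bimod.rightUnitorBimod (UQQ Q)).inv ≫
      Bimod.whiskerLeft (UQQ Q) (coevRmor Q δ hfrob₁ hfrob₂) ≫
      (Bimod.associatorBimod (UQQ Q) (QQU Q) (UQQ Q)).inv ≫
      Bimod.whiskerRight (evRmor Q δ ε) (UQQ Q) ≫
      (Bimod.leftUnitorBimod (UQQ Q)).hom = 𝟙 (UQQ Q) := by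
  refine gsnake1 (UQQ Q) (QQU Q) _ _ ((MonObj.mul (X := Q.X)) ≫ ε) δ
    (gEv_tπ _ _ _ _ _ _) rfl ?_
  change (ρ_ Q.X).inv ≫ (Q.X ◁ (MonObj.one (X := Q.X))) ≫ (Q.X ◁ δ) ≫ (α_ Q.X Q.X Q.X).inv ≫
    (((MonObj.mul (X := Q.X)) ≫ ε) ▷ Q.X) ≫ (λ_ Q.X).hom = 𝟙 Q.X
  rw [comp_whiskerRight]
  simp only [Category.assoc]
  rw [← reassoc_of% hfrob₁, reassoc_of% (MonObj.mul_one Q.X), Iso.inv_hom_id_assoc]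
  exact hcounit₁

theorem snake2 (δ : Q.X ⟶ Q.X ⊗ Q.X) (ε : Q.X ⟶ 𝟙_ C)
    (hcounit₂ : δ ≫ (Q.X ◁ ε) ≫ (ρ_ Q.X).hom = 𝟙 Q.X)
    (hfrob₁ : (MonObj.mul (X := Q.X)) ≫ δ =
      (Q.X ◁ δ) ≫ (α_ Q.X Q.X Q.X).inv ≫ ((MonObj.mul (X := Q.X)) ▷ Q.X))
    (hfrob₂ : (MonObj.mul (X := Q.X)) ≫ δ =
      (δ ▷ Q.X) ≫ (α_ Q.X Q.X Q.X).hom ≫ (Q.X ◁ (MonObj.mul (X := Q.X)))) :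
    (Bimod.leftUnitorBimod (QQU Q)).inv ≫
      Bimod.whiskerRight (coevRmor Q δ hfrob₁ hfrob₂) (QQU Q) ≫
      (Bimod.associatorBimod (QQU Q) (UQQ Q) (QQU Q)).hom ≫
      Bimod.whiskerLeft (QQU Q) (evRmor Q δ ε) ≫
      (Bimod.rightUnitorBimod (QQU Q)).hom = 𝟙 (QQU Q) := by
  refine gsnake2 (QQU Q) (UQQ Q) _ _ ((MonObj.mul (X := Q.X)) ≫ ε) δ
    (gEv_tπ _ _ _ _ _ _) rfl ?_
  change (λ_ Q.X).inv ≫ ((MonObj.one (X := Q.X)) ▷ Q.X) ≫ (δ ▷ Q.X) ≫ (α_ Q.X Q.X Q.X).hom ≫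
    (Q.X ◁ ((MonObj.mul (X := Q.X)) ≫ ε)) ≫ (ρ_ Q.X).hom = 𝟙 Q.X
  rw [MonoidalCategory.whiskerLeft_comp]
  simp only [Category.assoc]
  rw [← reassoc_of% hfrob₂, reassoc_of% (MonObj.one_mul Q.X), Iso.inv_hom_id_assoc]
  exact hcounit₂

theorem snakeA :
    (Bimod.leftUnitorBimod (UQQ Q)).inv ≫ Bimod.whiskerRight (coevLmor Q) (UQQ Q) ≫
      (Bimod.associatorBimod (UQQ Q) (QQU Q) (UQQ Q)).hom ≫
      Bimod.whiskerLeft (UQQ Q) (evLmor Q) ≫ (Bimod.rightUnitorBimod (UQQ Q)).hom =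
      𝟙 (UQQ Q) := by
  refine gsnake2 (UQQ Q) (QQU Q) _ _ (MonObj.mul (X := Q.X)) (cL Q)
    (gEv_tπ _ _ _ _ _ _) rfl ?_
  change (λ_ Q.X).inv ≫ (𝟙 (𝟙_ C) ▷ Q.X) ≫ (cL Q ▷ Q.X) ≫ (α_ Q.X Q.X Q.X).hom ≫
    (Q.X ◁ (MonObj.mul (X := Q.X))) ≫ (MonObj.mul (X := Q.X)) = 𝟙 Q.X
  rw [← MonObj.mul_assoc]
  simp only [cL, id_whiskerRight, Category.id_comp, comp_whiskerRight, Category.assoc]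
  rw [← comp_whiskerRight_assoc ((MonObj.one (X := Q.X)) ▷ Q.X), MonObj.one_mul,
    ← comp_whiskerRight_assoc (λ_ Q.X).inv, Iso.inv_hom_id, id_whiskerRight, Category.id_comp,
    MonObj.one_mul, Iso.inv_hom_id]

theorem snakeB :
    (Bimod.rightUnitorBimod (QQU Q)).inv ≫ Bimod.whiskerLeft (QQU Q) (coevLmor Q) ≫
      (Bimod.associatorBimod (QQU Q) (UQQ Q) (QQU Q)).inv ≫
      Bimod.whiskerRight (evLmor Q) (QQU Q) ≫ (Bimod.leftUnitorBimod (QQU Q)).hom =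
      𝟙 (QQU Q) := by
  refine gsnake1 (QQU Q) (UQQ Q) _ _ (MonObj.mul (X := Q.X)) (cL Q)
    (gEv_tπ _ _ _ _ _ _) rfl ?_
  change (ρ_ Q.X).inv ≫ (Q.X ◁ 𝟙 (𝟙_ C)) ≫ (Q.X ◁ cL Q) ≫ (α_ Q.X Q.X Q.X).inv ≫
    ((MonObj.mul (X := Q.X)) ▷ Q.X) ≫ (MonObj.mul (X := Q.X)) = 𝟙 Q.X
  rw [← MonObj.mul_assoc_flip]
  simp only [cL, MonoidalCategory.whiskerLeft_id, Category.id_comp,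
    MonoidalCategory.whiskerLeft_comp, Category.assoc]
  rw [← MonoidalCategory.whiskerLeft_comp_assoc (f := (MonObj.one (X := Q.X)) ▷ Q.X), MonObj.one_mul,
    ← MonoidalCategory.whiskerLeft_comp_assoc (f := (λ_ Q.X).inv), Iso.inv_hom_id,
    MonoidalCategory.whiskerLeft_id, Category.id_comp, MonObj.mul_one, Iso.inv_hom_id]

/-- For a Frobenius algebra `(Q, m, η, δ, ε)` in a monoidal category `M`
with coequalizers preserved by the tensor product, `{}_Q Q_U` is also a right dual of
`{}_U Q_Q` in `BIM(M)`: the 2-cells `ev_R = ε ∘ t` and `coev_R = δ` satisfy the snake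
identities.  Hence `{}_U Q_Q` is a Frobenius 1-morphism (it has a two-sided dual). -/
theorem internal_bimodule_frobenius_right_dual
    (δ : Q.X ⟶ Q.X ⊗ Q.X) (ε : Q.X ⟶ 𝟙_ C)
    (hcoassoc : δ ≫ (δ ▷ Q.X) ≫ (α_ Q.X Q.X Q.X).hom = δ ≫ (Q.X ◁ δ))
    (hcounit₁ : δ ≫ (ε ▷ Q.X) ≫ (λ_ Q.X).hom = 𝟙 Q.X)
    (hcounit₂ : δ ≫ (Q.X ◁ ε) ≫ (ρ_ Q.X).hom = 𝟙 Q.X)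
    (hfrob₁ : (MonObj.mul (X := Q.X)) ≫ δ = (Q.X ◁ δ) ≫ (α_ Q.X Q.X Q.X).inv ≫ ((MonObj.mul (X := Q.X)) ▷ Q.X))
    (hfrob₂ : (MonObj.mul (X := Q.X)) ≫ δ = (δ ▷ Q.X) ≫ (α_ Q.X Q.X Q.X).hom ≫ (Q.X ◁ (MonObj.mul (X := Q.X)))) :
    ∃ (evR : (UQQ Q).tensorBimod (QQU Q) ⟶ Bimod.regular (Mon.trivial C))
      (coevR : Bimod.regular Q ⟶ (QQU Q).tensorBimod (UQQ Q)),
      evR.hom = coequalizer.desc ((MonObj.mul (X := Q.X)) ≫ ε) (evR_wcond Q δ ε) ∧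
      coevR.hom = δ ≫ coequalizer.π _ _ ∧
      ((Bimod.rightUnitorBimod (UQQ Q)).inv ≫ Bimod.whiskerLeft (UQQ Q) coevR ≫
          (Bimod.associatorBimod (UQQ Q) (QQU Q) (UQQ Q)).inv ≫
          Bimod.whiskerRight evR (UQQ Q) ≫ (Bimod.leftUnitorBimod (UQQ Q)).hom =
        𝟙 (UQQ Q)) ∧
      ((Bimod.leftUnitorBimod (QQU Q)).inv ≫ Bimod.whiskerRight coevR (QQU Q) ≫
          (Bimod.associatorBimod (QQU Q) (UQQ Q) (QQU Q)).hom ≫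
          Bimod.whiskerLeft (QQU Q) evR ≫ (Bimod.rightUnitorBimod (QQU Q)).hom =
        𝟙 (QQU Q)) ∧
      -- hence `{}_U Q_Q` has a two-sided dual: it is also left dual to `{}_Q Q_U`
      (∃ (evL : (QQU Q).tensorBimod (UQQ Q) ⟶ Bimod.regular Q)
        (coevL : Bimod.regular (Mon.trivial C) ⟶ (UQQ Q).tensorBimod (QQU Q)),
        ((Bimod.leftUnitorBimod (UQQ Q)).inv ≫ Bimod.whiskerRight coevL (UQQ Q) ≫
            (Bimod.associatorBimod (UQQ Q) (QQU Q) (UQQ Q)).hom ≫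
            Bimod.whiskerLeft (UQQ Q) evL ≫ (Bimod.rightUnitorBimod (UQQ Q)).hom =
          𝟙 (UQQ Q)) ∧
        ((Bimod.rightUnitorBimod (QQU Q)).inv ≫ Bimod.whiskerLeft (QQU Q) coevL ≫
            (Bimod.associatorBimod (QQU Q) (UQQ Q) (QQU Q)).inv ≫
            Bimod.whiskerRight evL (QQU Q) ≫ (Bimod.leftUnitorBimod (QQU Q)).hom =
          𝟙 (QQU Q))) := by
  exact ⟨evRmor Q δ ε, coevRmor Q δ hfrob₁ hfrob₂, rfl, rfl,
    snake1 Q δ ε hcounit₁ hfrob₁ hfrob₂, snake2 Q δ ε hcounit₂ hfrob₁ hfrob₂,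
    evLmor Q, coevLmor Q, snakeA Q, snakeB Q⟩
end
end

section
/- In a Hopf algebroid with non-degenerate right integral i, the two expressions for the convolution product agree: t_L({}_*ρ(h₍₂₎ S(k))) h₍₁₎ = s_L({}_*ρ(h S(k₍₁₎))) k₍₂₎ for all h, k ∈ H, where {}_*ρ = {}_Li⁻¹(1_H). -/
universe u

/-- A Böhm–Szlachányi Hopf algebroid with total ring `A`, left bialgebroid structure over `L`
and right bialgebroid structure over `R`.  The coproducts `γ_L(a) = ∑ᵢ c1 a i ⊗ c2 a i`
(`i < nL a`) and `γ_R(a) = ∑ᵢ d1 a i ⊗ d2 a i` (`i < nR a`) are recorded by chosen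
representatives; all identities involving them are stated by evaluation against arbitrary
balanced biadditive maps, which is exactly equality in the corresponding tensor product
over the (non-commutative) base ring.  Multiplication in `A` is written in the same order
as in the paper. -/
structure HopfAlgebroidData (A L R : Type u) [Ring A] [Ring L] [Ring R] where
  sL : L → A
  tL : L → A
  sR : R → A
  tR : R → A
  sL_one : sL 1 = 1
  sL_add : ∀ x y, sL (x + y) = sL x + sL y
  sL_mul : ∀ x y, sL (x * y) = sL x * sL y
  tL_one : tL 1 = 1
  tL_add : ∀ x y, tL (x + y) = tL x + tL y
  tL_mul : ∀ x y, tL (x * y) = tL y * tL x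
  sR_one : sR 1 = 1
  sR_add : ∀ x y, sR (x + y) = sR x + sR y
  sR_mul : ∀ x y, sR (x * y) = sR x * sR y
  tR_one : tR 1 = 1
  tR_add : ∀ x y, tR (x + y) = tR x + tR y
  tR_mul : ∀ x y, tR (x * y) = tR y * tR x
  commL : ∀ l l', sL l * tL l' = tL l' * sL l
  commR : ∀ r r', sR r * tR r' = tR r' * sR r
  /-- number of terms of `γ_L a` -/
  nL : A → ℕ
  c1 : A → ℕ → A
  c2 : A → ℕ → A
  πL : A → L
  /-- number of terms of `γ_R a` -/
  nR : A → ℕ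
  d1 : A → ℕ → A
  d2 : A → ℕ → A
  πR : A → R
  S : A → A
  Sinv : A → A
  -- `γ_L` is additive, a bimodule map `_L A _L → A_L ⊗_L {}_L A`
  -- (with `l·a·l' = sL l * tL l' * a`, balanced maps satisfy `f (tL l * u) v = f u (sL l * v)`)
  comulL_add : ∀ {M : Type u} [AddCommGroup M] (f : A → A → M),
    (∀ u u' v, f (u + u') v = f u v + f u' v) →
    (∀ u v v', f u (v + v') = f u v + f u v') →
    (∀ l u v, f (tL l * u) v = f u (sL l * v)) →
    ∀ a b, (∑ i ∈ Finset.range (nL (a + b)), f (c1 (a + b) i) (c2 (a + b) i)) =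
      (∑ i ∈ Finset.range (nL a), f (c1 a i) (c2 a i)) +
      (∑ i ∈ Finset.range (nL b), f (c1 b i) (c2 b i))
  comulL_bimod : ∀ {M : Type u} [AddCommGroup M] (f : A → A → M),
    (∀ u u' v, f (u + u') v = f u v + f u' v) →
    (∀ u v v', f u (v + v') = f u v + f u v') →
    (∀ l u v, f (tL l * u) v = f u (sL l * v)) →
    ∀ (l l' : L) a,
      (∑ i ∈ Finset.range (nL (sL l * tL l' * a)),
        f (c1 (sL l * tL l' * a) i) (c2 (sL l * tL l' * a) i)) =
      (∑ i ∈ Finset.range (nL a), f (sL l * c1 a i) (tL l' * c2 a i))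
  comulL_coassoc : ∀ {M : Type u} [AddCommGroup M] (g : A → A → A → M),
    (∀ u u' v w, g (u + u') v w = g u v w + g u' v w) →
    (∀ u v v' w, g u (v + v') w = g u v w + g u v' w) →
    (∀ u v w w', g u v (w + w') = g u v w + g u v w') →
    (∀ l u v w, g (tL l * u) v w = g u (sL l * v) w) →
    (∀ l u v w, g u (tL l * v) w = g u v (sL l * w)) →
    ∀ a, (∑ i ∈ Finset.range (nL a), ∑ j ∈ Finset.range (nL (c1 a i)),
        g (c1 (c1 a i) j) (c2 (c1 a i) j) (c2 a i)) =
      (∑ i ∈ Finset.range (nL a), ∑ j ∈ Finset.range (nL (c2 a i)),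
        g (c1 a i) (c1 (c2 a i) j) (c2 (c2 a i) j))
  comulL_takeuchi : ∀ {M : Type u} [AddCommGroup M] (f : A → A → M),
    (∀ u u' v, f (u + u') v = f u v + f u' v) →
    (∀ u v v', f u (v + v') = f u v + f u v') →
    (∀ l u v, f (tL l * u) v = f u (sL l * v)) →
    ∀ (l : L) a, (∑ i ∈ Finset.range (nL a), f (c1 a i * tL l) (c2 a i)) =
      (∑ i ∈ Finset.range (nL a), f (c1 a i) (c2 a i * sL l))
  comulL_one : ∀ {M : Type u} [AddCommGroup M] (f : A → A → M),
    (∀ u u' v, f (u + u') v = f u v + f u' v) →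
    (∀ u v v', f u (v + v') = f u v + f u v') →
    (∀ l u v, f (tL l * u) v = f u (sL l * v)) →
    (∑ i ∈ Finset.range (nL 1), f (c1 1 i) (c2 1 i)) = f 1 1
  comulL_mul : ∀ {M : Type u} [AddCommGroup M] (f : A → A → M),
    (∀ u u' v, f (u + u') v = f u v + f u' v) →
    (∀ u v v', f u (v + v') = f u v + f u v') →
    (∀ l u v, f (tL l * u) v = f u (sL l * v)) →
    ∀ a b, (∑ i ∈ Finset.range (nL (a * b)), f (c1 (a * b) i) (c2 (a * b) i)) =
      (∑ i ∈ Finset.range (nL a), ∑ j ∈ Finset.range (nL b),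
        f (c1 a i * c1 b j) (c2 a i * c2 b j))
  πL_one : πL 1 = 1
  πL_add : ∀ a b, πL (a + b) = πL a + πL b
  counitL_left : ∀ a, (∑ i ∈ Finset.range (nL a), sL (πL (c1 a i)) * c2 a i) = a
  counitL_right : ∀ a, (∑ i ∈ Finset.range (nL a), tL (πL (c2 a i)) * c1 a i) = a
  πL_runit : ∀ a b, πL (a * sL (πL b)) = πL (a * b)
  πL_runit' : ∀ a b, πL (a * tL (πL b)) = πL (a * b)
  -- right bialgebroid data (`r·a·r' = a * sR r' * tR r`, balanced maps satisfy
  -- `f (u * sR r) v = f u (v * tR r)`)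
  comulR_add : ∀ {M : Type u} [AddCommGroup M] (f : A → A → M),
    (∀ u u' v, f (u + u') v = f u v + f u' v) →
    (∀ u v v', f u (v + v') = f u v + f u v') →
    (∀ r u v, f (u * sR r) v = f u (v * tR r)) →
    ∀ a b, (∑ i ∈ Finset.range (nR (a + b)), f (d1 (a + b) i) (d2 (a + b) i)) =
      (∑ i ∈ Finset.range (nR a), f (d1 a i) (d2 a i)) +
      (∑ i ∈ Finset.range (nR b), f (d1 b i) (d2 b i))
  comulR_bimod : ∀ {M : Type u} [AddCommGroup M] (f : A → A → M),
    (∀ u u' v, f (u + u') v = f u v + f u' v) →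
    (∀ u v v', f u (v + v') = f u v + f u v') →
    (∀ r u v, f (u * sR r) v = f u (v * tR r)) →
    ∀ (r r' : R) a,
      (∑ i ∈ Finset.range (nR (a * sR r' * tR r)),
        f (d1 (a * sR r' * tR r) i) (d2 (a * sR r' * tR r) i)) =
      (∑ i ∈ Finset.range (nR a), f (d1 a i * tR r) (d2 a i * sR r'))
  comulR_coassoc : ∀ {M : Type u} [AddCommGroup M] (g : A → A → A → M),
    (∀ u u' v w, g (u + u') v w = g u v w + g u' v w) →
    (∀ u v v' w, g u (v + v') w = g u v w + g u v' w) →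
    (∀ u v w w', g u v (w + w') = g u v w + g u v w') →
    (∀ r u v w, g (u * sR r) v w = g u (v * tR r) w) →
    (∀ r u v w, g u (v * sR r) w = g u v (w * tR r)) →
    ∀ a, (∑ i ∈ Finset.range (nR a), ∑ j ∈ Finset.range (nR (d1 a i)),
        g (d1 (d1 a i) j) (d2 (d1 a i) j) (d2 a i)) =
      (∑ i ∈ Finset.range (nR a), ∑ j ∈ Finset.range (nR (d2 a i)),
        g (d1 a i) (d1 (d2 a i) j) (d2 (d2 a i) j))
  comulR_takeuchi : ∀ {M : Type u} [AddCommGroup M] (f : A → A → M),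
    (∀ u u' v, f (u + u') v = f u v + f u' v) →
    (∀ u v v', f u (v + v') = f u v + f u v') →
    (∀ r u v, f (u * sR r) v = f u (v * tR r)) →
    ∀ (r : R) a, (∑ i ∈ Finset.range (nR a), f (sR r * d1 a i) (d2 a i)) =
      (∑ i ∈ Finset.range (nR a), f (d1 a i) (tR r * d2 a i))
  comulR_one : ∀ {M : Type u} [AddCommGroup M] (f : A → A → M),
    (∀ u u' v, f (u + u') v = f u v + f u' v) →
    (∀ u v v', f u (v + v') = f u v + f u v') →
    (∀ r u v, f (u * sR r) v = f u (v * tR r)) →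
    (∑ i ∈ Finset.range (nR 1), f (d1 1 i) (d2 1 i)) = f 1 1
  comulR_mul : ∀ {M : Type u} [AddCommGroup M] (f : A → A → M),
    (∀ u u' v, f (u + u') v = f u v + f u' v) →
    (∀ u v v', f u (v + v') = f u v + f u v') →
    (∀ r u v, f (u * sR r) v = f u (v * tR r)) →
    ∀ a b, (∑ i ∈ Finset.range (nR (a * b)), f (d1 (a * b) i) (d2 (a * b) i)) =
      (∑ i ∈ Finset.range (nR a), ∑ j ∈ Finset.range (nR b),
        f (d1 a i * d1 b j) (d2 a i * d2 b j))
  πR_one : πR 1 = 1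
  πR_add : ∀ a b, πR (a + b) = πR a + πR b
  counitR_left : ∀ a, (∑ i ∈ Finset.range (nR a), d1 a i * sR (πR (d2 a i))) = a
  counitR_right : ∀ a, (∑ i ∈ Finset.range (nR a), d2 a i * tR (πR (d1 a i))) = a
  πR_lunit : ∀ a b, πR (sR (πR a) * b) = πR (a * b)
  πR_lunit' : ∀ a b, πR (tR (πR a) * b) = πR (a * b)
  -- Hopf algebroid axioms
  range_sL_tR : Set.range sL = Set.range tR
  range_tL_sR : Set.range tL = Set.range sR
  mixed₁ : ∀ {M : Type u} [AddCommGroup M] (g : A → A → A → M),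
    (∀ u u' v w, g (u + u') v w = g u v w + g u' v w) →
    (∀ u v v' w, g u (v + v') w = g u v w + g u v' w) →
    (∀ u v w w', g u v (w + w') = g u v w + g u v w') →
    (∀ l u v w, g (tL l * u) v w = g u (sL l * v) w) →
    (∀ r u v w, g u (v * sR r) w = g u v (w * tR r)) →
    ∀ a, (∑ i ∈ Finset.range (nR a), ∑ j ∈ Finset.range (nL (d1 a i)),
        g (c1 (d1 a i) j) (c2 (d1 a i) j) (d2 a i)) =
      (∑ i ∈ Finset.range (nL a), ∑ j ∈ Finset.range (nR (c2 a i)),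
        g (c1 a i) (d1 (c2 a i) j) (d2 (c2 a i) j))
  mixed₂ : ∀ {M : Type u} [AddCommGroup M] (g : A → A → A → M),
    (∀ u u' v w, g (u + u') v w = g u v w + g u' v w) →
    (∀ u v v' w, g u (v + v') w = g u v w + g u v' w) →
    (∀ u v w w', g u v (w + w') = g u v w + g u v w') →
    (∀ r u v w, g (u * sR r) v w = g u (v * tR r) w) →
    (∀ l u v w, g u (tL l * v) w = g u v (sL l * w)) →
    ∀ a, (∑ i ∈ Finset.range (nL a), ∑ j ∈ Finset.range (nR (c1 a i)),
        g (d1 (c1 a i) j) (d2 (c1 a i) j) (c2 a i)) =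
      (∑ i ∈ Finset.range (nR a), ∑ j ∈ Finset.range (nL (d2 a i)),
        g (d1 a i) (c1 (d2 a i) j) (c2 (d2 a i) j))
  S_add : ∀ a b, S (a + b) = S a + S b
  S_leftinv : ∀ a, Sinv (S a) = a
  S_rightinv : ∀ a, S (Sinv a) = a
  S_twistL : ∀ l l' a, S (tL l * a * tL l') = sL l' * S a * sL l
  S_twistR : ∀ r r' a, S (tR r' * a * tR r) = sR r * S a * sR r'
  antipode_L : ∀ a, (∑ i ∈ Finset.range (nL a), S (c1 a i) * c2 a i) = sR (πR a)
  antipode_R : ∀ a, (∑ i ∈ Finset.range (nR a), d1 a i * S (d2 a i)) = sL (πL a)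


namespace HopfAlgebroidData

variable {A L R : Type u} [Ring A] [Ring L] [Ring R] (H : HopfAlgebroidData A L R)

/-- The left `L`-dual `{}_*H` of `{}_L H` (maps `{}_L A → {}_L L`). -/
def LStarDual : Type u :=
  {φ : A → L // (∀ x y, φ (x + y) = φ x + φ y) ∧ ∀ l x, φ (H.sL l * x) = l * φ x}

/-- The right `L`-dual `H_*` of `H_L` (maps `A_L → L_L`). -/
def StarLDual : Type u :=
  {φ : A → L // (∀ x y, φ (x + y) = φ x + φ y) ∧ ∀ l x, φ (H.tL l * x) = φ x * l}

/-- The map `{}_L i : {}_*H → H`, `φ ↦ i ⇁ φ = t_L(φ(i₍₂₎)) i₍₁₎`. -/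
def intMapL (i : A) : H.LStarDual → A :=
  fun φ => ∑ k ∈ Finset.range (H.nL i), H.tL (φ.1 (H.c2 i k)) * H.c1 i k

/-- The map `i_L : H_* → H`, `φ ↦ i ↼ φ = s_L(φ(i₍₁₎)) i₍₂₎`. -/
def intMapR (i : A) : H.StarLDual → A :=
  fun φ => ∑ k ∈ Finset.range (H.nL i), H.sL (φ.1 (H.c1 i k)) * H.c2 i k

/-- The convolution product `h ∗ k = t_L(ρ(h₍₂₎ S(k))) h₍₁₎`, where `ρ = {}_L i⁻¹(1)`. -/
def hconv (ρ : A → L) (h k : A) : A :=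
  ∑ j ∈ Finset.range (H.nL h), H.tL (ρ (H.c2 h j * H.S k)) * H.c1 h j

/-- The unit map `η : R → H`, `r ↦ i s_R(r)` of the convolution algebra. -/
def heta (i : A) (r : R) : A := i * H.sR r

end HopfAlgebroidData

section ConvAux

open Finset

variable {A L R : Type u} [Ring A] [Ring L] [Ring R] (H : HopfAlgebroidData A L R)

lemma aux_S_tL_mul (l : L) (a : A) : H.S (H.tL l * a) = H.S a * H.sL l := by
  have := H.S_twistL l 1 a
  simpa [H.tL_one, H.sL_one] using this

lemma aux_S_mul_tL (a : A) (l : L) : H.S (a * H.tL l) = H.sL l * H.S a := by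
  have := H.S_twistL 1 l a
  simpa [H.tL_one, H.sL_one] using this

lemma aux_S_mul_tR (a : A) (r : R) : H.S (a * H.tR r) = H.sR r * H.S a := by
  have := H.S_twistR r 1 a
  simpa [H.tR_one, H.sR_one] using this

lemma aux_S_zero : H.S 0 = 0 := by
  have h := H.S_add 0 0
  rw [add_zero] at h
  exact left_eq_add.mp h

lemma aux_S_sum (s : Finset ℕ) (g : ℕ → A) :
    H.S (∑ x ∈ s, g x) = ∑ x ∈ s, H.S (g x) := by
  classical
  induction s using Finset.induction_on with
  | empty => simpa using aux_S_zero H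
  | insert _ _ hx ih => rw [Finset.sum_insert hx, Finset.sum_insert hx, H.S_add, ih]

lemma aux_S_one : H.S 1 = 1 := by
  have h := H.comulL_one (M := A) (fun u v => H.S u * v)
    (fun u u' v => by simp only [H.S_add, add_mul])
    (fun u v v' => by simp only [mul_add])
    (fun l u v => by simp only [aux_S_tL_mul, mul_assoc])
  have h2 := H.antipode_L 1
  have h3 := (h.symm.trans h2)
  simpa [H.πR_one, H.sR_one] using h3

lemma aux_S_tL (l : L) : H.S (H.tL l) = H.sL l := by
  have := aux_S_mul_tL H 1 l
  simpa [aux_S_one] using this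

lemma aux_Sinv_sL (l : L) : H.Sinv (H.sL l) = H.tL l := by
  rw [← aux_S_tL H l, H.S_leftinv]

lemma addf_sum {M N : Type u} [AddCommGroup M] [AddCommGroup N] (f : M → N)
    (hf : ∀ x y, f (x + y) = f x + f y) (s : Finset ℕ) (g : ℕ → M) :
    f (∑ x ∈ s, g x) = ∑ x ∈ s, f (g x) := by
  classical
  have h0 : f 0 = 0 := by
    have := hf 0 0
    rw [add_zero] at this
    exact left_eq_add.mp this
  induction s using Finset.induction_on with
  | empty => simpa using h0
  | insert _ _ hx ih => rw [Finset.sum_insert hx, Finset.sum_insert hx, hf, ih]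

lemma fsum_left {M : Type u} [AddCommGroup M] (f : A → A → M)
    (h1 : ∀ u u' v, f (u + u') v = f u v + f u' v)
    (s : Finset ℕ) (g : ℕ → A) (v : A) :
    f (∑ x ∈ s, g x) v = ∑ x ∈ s, f (g x) v :=
  addf_sum (fun u => f u v) (fun x y => h1 x y v) s g

lemma fsum_right {M : Type u} [AddCommGroup M] (f : A → A → M)
    (h2 : ∀ u v v', f u (v + v') = f u v + f u v')
    (u : A) (s : Finset ℕ) (g : ℕ → A) :
    f u (∑ x ∈ s, g x) = ∑ x ∈ s, f u (g x) :=
  addf_sum (fun v => f u v) (fun x y => h2 u x y) s g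

variable {M : Type u} [AddCommGroup M]

lemma comulL_tL' (f : A → A → M)
    (h1 : ∀ u u' v, f (u + u') v = f u v + f u' v)
    (h2 : ∀ u v v', f u (v + v') = f u v + f u v')
    (h3 : ∀ l u v, f (H.tL l * u) v = f u (H.sL l * v))
    (l : L) (a : A) :
    (∑ j ∈ Finset.range (H.nL (H.tL l * a)),
      f (H.c1 (H.tL l * a) j) (H.c2 (H.tL l * a) j)) =
    ∑ j ∈ Finset.range (H.nL a), f (H.c1 a j) (H.tL l * H.c2 a j) := by
  have := H.comulL_bimod f h1 h2 h3 1 l a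
  simpa [H.sL_one] using this

lemma comulL_sL' (f : A → A → M)
    (h1 : ∀ u u' v, f (u + u') v = f u v + f u' v)
    (h2 : ∀ u v v', f u (v + v') = f u v + f u v')
    (h3 : ∀ l u v, f (H.tL l * u) v = f u (H.sL l * v))
    (l : L) (a : A) :
    (∑ j ∈ Finset.range (H.nL (H.sL l * a)),
      f (H.c1 (H.sL l * a) j) (H.c2 (H.sL l * a) j)) =
    ∑ j ∈ Finset.range (H.nL a), f (H.sL l * H.c1 a j) (H.c2 a j) := by
  have := H.comulL_bimod f h1 h2 h3 l 1 a
  simpa [H.tL_one] using this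

lemma comulL_zero' (f : A → A → M)
    (h1 : ∀ u u' v, f (u + u') v = f u v + f u' v)
    (h2 : ∀ u v v', f u (v + v') = f u v + f u v')
    (h3 : ∀ l u v, f (H.tL l * u) v = f u (H.sL l * v)) :
    (∑ j ∈ Finset.range (H.nL (0 : A)), f (H.c1 0 j) (H.c2 0 j)) = 0 := by
  have := H.comulL_add f h1 h2 h3 0 0
  rw [add_zero] at this
  exact left_eq_add.mp this

lemma comulL_sum' (f : A → A → M)
    (h1 : ∀ u u' v, f (u + u') v = f u v + f u' v)
    (h2 : ∀ u v v', f u (v + v') = f u v + f u v')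
    (h3 : ∀ l u v, f (H.tL l * u) v = f u (H.sL l * v))
    (s : Finset ℕ) (g : ℕ → A) :
    (∑ j ∈ Finset.range (H.nL (∑ x ∈ s, g x)),
      f (H.c1 (∑ x ∈ s, g x) j) (H.c2 (∑ x ∈ s, g x) j)) =
    ∑ x ∈ s, ∑ j ∈ Finset.range (H.nL (g x)), f (H.c1 (g x) j) (H.c2 (g x) j) := by
  classical
  induction s using Finset.induction_on with
  | empty => simpa using comulL_zero' H f h1 h2 h3
  | insert _ _ hx ih =>
      rw [Finset.sum_insert hx, Finset.sum_insert hx, ← ih]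
      exact H.comulL_add f h1 h2 h3 _ _

lemma tak2 (f : A → A → M)
    (h1 : ∀ u u' v, f (u + u') v = f u v + f u' v)
    (h2 : ∀ u v v', f u (v + v') = f u v + f u v')
    (h3 : ∀ l u v, f (H.tL l * u) v = f u (H.sL l * v))
    (a : A) (l : L) (x y : A) :
    (∑ k ∈ Finset.range (H.nL a), f (H.c1 a k * H.tL l * x) (H.c2 a k * y)) =
    ∑ k ∈ Finset.range (H.nL a), f (H.c1 a k * x) (H.c2 a k * H.sL l * y) := by
  have := H.comulL_takeuchi (fun u v => f (u * x) (v * y))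
    (fun u u' v => by simp only [add_mul, h1])
    (fun u v v' => by simp only [add_mul, h2])
    (fun m u v => by
      show f (H.tL m * u * x) (v * y) = f (u * x) (H.sL m * v * y)
      rw [mul_assoc, h3, mul_assoc]) l a
  simpa using this

lemma comul_tL_one (f : A → A → M)
    (h1 : ∀ u u' v, f (u + u') v = f u v + f u' v)
    (h2 : ∀ u v v', f u (v + v') = f u v + f u v')
    (h3 : ∀ l u v, f (H.tL l * u) v = f u (H.sL l * v))
    (l : L) :
    (∑ j ∈ Finset.range (H.nL (H.tL l)),
      f (H.c1 (H.tL l) j) (H.c2 (H.tL l) j)) = f 1 (H.tL l) := by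
  have h := comulL_tL' H f h1 h2 h3 l 1
  rw [mul_one] at h
  have h2' := H.comulL_one (fun u v => f u (H.tL l * v))
    (fun u u' v => by simp only [h1])
    (fun u v v' => by simp only [mul_add, h2])
    (fun m u v => by
      show f (H.tL m * u) (H.tL l * v) = f u (H.tL l * (H.sL m * v))
      rw [h3, ← mul_assoc, H.commL, mul_assoc])
  have h3' : (∑ j ∈ Finset.range (H.nL 1), f (H.c1 1 j) (H.tL l * H.c2 1 j))
      = f 1 (H.tL l * 1) := h2'
  rw [mul_one] at h3'
  exact h.trans h3'

lemma moveSR (i : A) (hri : ∀ a, i * a = i * H.sR (H.πR a))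
    (F : A → A → M)
    (h1 : ∀ u u' v, F (u + u') v = F u v + F u' v)
    (h2 : ∀ u v v', F u (v + v') = F u v + F u v')
    (h3 : ∀ l u v, F (H.tL l * u) v = F u (H.sL l * v))
    (b : A) :
    (∑ k ∈ Finset.range (H.nL i), ∑ j ∈ Finset.range (H.nL b),
      F (H.c1 i k * H.c1 b j) (H.c2 i k * H.c2 b j)) =
    ∑ k ∈ Finset.range (H.nL i), F (H.c1 i k) (H.c2 i k * H.sR (H.πR b)) := by
  obtain ⟨l, hl⟩ : H.sR (H.πR b) ∈ Set.range H.tL := by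
    rw [H.range_tL_sR]; exact ⟨_, rfl⟩
  have hmul := H.comulL_mul F h1 h2 h3 i b
  have hib : i * b = i * H.tL l := by rw [hri b, hl]
  rw [hib] at hmul
  have hmul2 := H.comulL_mul F h1 h2 h3 i (H.tL l)
  rw [hmul2] at hmul
  -- hmul : ∑∑ (b-version) = ∑∑ (tL l version)
  rw [← hmul]
  -- goal : ∑∑ (tL l version) = RHS
  rw [Finset.sum_comm]
  have hf1 : ∀ (u u' v : A),
      (∑ k ∈ Finset.range (H.nL i), F (H.c1 i k * (u + u')) (H.c2 i k * v)) =
      (∑ k ∈ Finset.range (H.nL i), F (H.c1 i k * u) (H.c2 i k * v)) +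
      (∑ k ∈ Finset.range (H.nL i), F (H.c1 i k * u') (H.c2 i k * v)) := by
    intro u u' v
    simp only [mul_add, h1, Finset.sum_add_distrib]
  have hf2 : ∀ (u v v' : A),
      (∑ k ∈ Finset.range (H.nL i), F (H.c1 i k * u) (H.c2 i k * (v + v'))) =
      (∑ k ∈ Finset.range (H.nL i), F (H.c1 i k * u) (H.c2 i k * v)) +
      (∑ k ∈ Finset.range (H.nL i), F (H.c1 i k * u) (H.c2 i k * v')) := by
    intro u v v'
    simp only [mul_add, h2, Finset.sum_add_distrib]
  have hf3 : ∀ (m : L) (u v : A),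
      (∑ k ∈ Finset.range (H.nL i), F (H.c1 i k * (H.tL m * u)) (H.c2 i k * v)) =
      (∑ k ∈ Finset.range (H.nL i), F (H.c1 i k * u) (H.c2 i k * (H.sL m * v))) := by
    intro m u v
    simp only [← mul_assoc]
    exact tak2 H F h1 h2 h3 i m u v
  have key := comul_tL_one H (fun u v => ∑ k ∈ Finset.range (H.nL i),
      F (H.c1 i k * u) (H.c2 i k * v)) hf1 hf2 hf3 l
  have key' : (∑ j ∈ Finset.range (H.nL (H.tL l)), ∑ k ∈ Finset.range (H.nL i),
      F (H.c1 i k * H.c1 (H.tL l) j) (H.c2 i k * H.c2 (H.tL l) j)) =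
      ∑ k ∈ Finset.range (H.nL i), F (H.c1 i k * 1) (H.c2 i k * H.tL l) := key
  rw [key']
  simp only [mul_one, hl]

lemma Sa_eq (a : A) :
    H.S a = ∑ m ∈ Finset.range (H.nR a), H.sR (H.πR (H.d1 a m)) * H.S (H.d2 a m) := by
  conv_lhs => rw [← H.counitR_right a]
  rw [aux_S_sum]
  exact Finset.sum_congr rfl fun m _ => aux_S_mul_tR H _ _

lemma star_lemma (i : A) (hri : ∀ a, i * a = i * H.sR (H.πR a))
    (F : A → A → M)
    (h1 : ∀ u u' v, F (u + u') v = F u v + F u' v)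
    (h2 : ∀ u v v', F u (v + v') = F u v + F u v')
    (h3 : ∀ l u v, F (H.tL l * u) v = F u (H.sL l * v))
    (a : A) :
    (∑ k ∈ Finset.range (H.nL i), F (H.c1 i k * a) (H.c2 i k)) =
    ∑ k ∈ Finset.range (H.nL i), F (H.c1 i k) (H.c2 i k * H.S a) := by
  calc
    (∑ k ∈ Finset.range (H.nL i), F (H.c1 i k * a) (H.c2 i k))
        = ∑ k ∈ Finset.range (H.nL i), ∑ j ∈ Finset.range (H.nL a),
            F (H.c1 i k * (H.tL (H.πL (H.c2 a j)) * H.c1 a j)) (H.c2 i k) := by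
          refine Finset.sum_congr rfl fun k _ => ?_
          conv_lhs => rw [← H.counitL_right a]
          rw [Finset.mul_sum, fsum_left F h1]
    _ = ∑ j ∈ Finset.range (H.nL a), ∑ k ∈ Finset.range (H.nL i),
            F (H.c1 i k * (H.tL (H.πL (H.c2 a j)) * H.c1 a j)) (H.c2 i k) :=
          Finset.sum_comm
    _ = ∑ j ∈ Finset.range (H.nL a), ∑ k ∈ Finset.range (H.nL i),
            F (H.c1 i k * H.c1 a j) (H.c2 i k * H.sL (H.πL (H.c2 a j))) := by
          refine Finset.sum_congr rfl fun j _ => ?_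
          have := tak2 H F h1 h2 h3 i (H.πL (H.c2 a j)) (H.c1 a j) 1
          simpa [mul_assoc] using this
    _ = ∑ j ∈ Finset.range (H.nL a), ∑ k ∈ Finset.range (H.nL i),
            ∑ m ∈ Finset.range (H.nR (H.c2 a j)),
            F (H.c1 i k * H.c1 a j)
              (H.c2 i k * (H.d1 (H.c2 a j) m * H.S (H.d2 (H.c2 a j) m))) := by
          refine Finset.sum_congr rfl fun j _ => Finset.sum_congr rfl fun k _ => ?_
          conv_lhs => rw [← H.antipode_R (H.c2 a j)]
          rw [Finset.mul_sum, fsum_right F h2]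
    _ = ∑ j ∈ Finset.range (H.nL a), ∑ m ∈ Finset.range (H.nR (H.c2 a j)),
            ∑ k ∈ Finset.range (H.nL i),
            F (H.c1 i k * H.c1 a j)
              (H.c2 i k * (H.d1 (H.c2 a j) m * H.S (H.d2 (H.c2 a j) m))) :=
          Finset.sum_congr rfl fun j _ => Finset.sum_comm
    _ = ∑ m ∈ Finset.range (H.nR a), ∑ j ∈ Finset.range (H.nL (H.d1 a m)),
            ∑ k ∈ Finset.range (H.nL i),
            F (H.c1 i k * H.c1 (H.d1 a m) j)
              (H.c2 i k * (H.c2 (H.d1 a m) j * H.S (H.d2 a m))) := by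
          refine (H.mixed₁ (fun x y z => ∑ k ∈ Finset.range (H.nL i),
            F (H.c1 i k * x) (H.c2 i k * (y * H.S z))) ?_ ?_ ?_ ?_ ?_ a).symm
          · intro u u' v w
            simp only [mul_add, h1, Finset.sum_add_distrib]
          · intro u v v' w
            simp only [add_mul, mul_add, h2, Finset.sum_add_distrib]
          · intro u v w w'
            simp only [H.S_add, mul_add, h2, Finset.sum_add_distrib]
          · intro l u v w
            show (∑ k ∈ Finset.range (H.nL i),
                F (H.c1 i k * (H.tL l * u)) (H.c2 i k * (v * H.S w))) =
              ∑ k ∈ Finset.range (H.nL i),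
                F (H.c1 i k * u) (H.c2 i k * (H.sL l * v * H.S w))
            have := tak2 H F h1 h2 h3 i l u (v * H.S w)
            simp only [mul_assoc] at this ⊢
            exact this
          · intro r u v w
            simp only [aux_S_mul_tR, mul_assoc]
    _ = ∑ m ∈ Finset.range (H.nR a), ∑ k ∈ Finset.range (H.nL i),
            F (H.c1 i k) (H.c2 i k * H.sR (H.πR (H.d1 a m)) * H.S (H.d2 a m)) := by
          refine Finset.sum_congr rfl fun m _ => ?_
          rw [Finset.sum_comm]
          have := moveSR H i hri (fun U V => F U (V * H.S (H.d2 a m)))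
            (fun u u' v => by simp only [h1])
            (fun u v v' => by simp only [add_mul, h2])
            (fun l u v => by
              show F (H.tL l * u) (v * H.S (H.d2 a m)) =
                F u (H.sL l * v * H.S (H.d2 a m))
              rw [h3, mul_assoc]) (H.d1 a m)
          simp only [mul_assoc] at this ⊢
          exact this
    _ = ∑ k ∈ Finset.range (H.nL i), ∑ m ∈ Finset.range (H.nR a),
            F (H.c1 i k) (H.c2 i k * (H.sR (H.πR (H.d1 a m)) * H.S (H.d2 a m))) := by
          rw [Finset.sum_comm]
          exact Finset.sum_congr rfl fun m _ => Finset.sum_congr rfl fun k _ => by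
            rw [mul_assoc]
    _ = ∑ k ∈ Finset.range (H.nL i), F (H.c1 i k) (H.c2 i k * H.S a) := by
          refine Finset.sum_congr rfl fun k _ => ?_
          rw [Sa_eq H a, Finset.mul_sum, fsum_right F h2]

variable (i : A) (ρ : A → L)

lemma lemmaG (hri : ∀ a, i * a = i * H.sR (H.πR a))
    (hρ_add : ∀ x y, ρ (x + y) = ρ x + ρ y)
    (hρ_lin : ∀ l x, ρ (H.sL l * x) = l * ρ x)
    (hρ : (∑ k ∈ Finset.range (H.nL i), H.tL (ρ (H.c2 i k)) * H.c1 i k) = 1)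
    (b : A) :
    (∑ k ∈ Finset.range (H.nL i), H.tL (ρ (H.c2 i k * b)) * H.c1 i k) = H.Sinv b := by
  have h : (∑ k ∈ Finset.range (H.nL i), H.tL (ρ (H.c2 i k)) * (H.c1 i k * H.Sinv b)) =
      ∑ k ∈ Finset.range (H.nL i), H.tL (ρ (H.c2 i k * b)) * H.c1 i k := by
    have := star_lemma H i hri (fun u v => H.tL (ρ v) * u)
      (fun u u' v => by simp only [mul_add])
      (fun u v v' => by simp only [hρ_add, H.tL_add, add_mul])
      (fun l u v => by simp only [hρ_lin, H.tL_mul, mul_assoc]) (H.Sinv b)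
    simpa [H.S_rightinv] using this
  rw [← h]
  simp only [← mul_assoc]
  rw [← Finset.sum_mul, hρ, one_mul]

lemma lemmaGinv (hri : ∀ a, i * a = i * H.sR (H.πR a))
    (hρ_add : ∀ x y, ρ (x + y) = ρ x + ρ y)
    (hρ_lin : ∀ l x, ρ (H.sL l * x) = l * ρ x)
    (hρ : (∑ k ∈ Finset.range (H.nL i), H.tL (ρ (H.c2 i k)) * H.c1 i k) = 1)
    (x : A) :
    (∑ k ∈ Finset.range (H.nL i), H.tL (ρ (H.c2 i k * H.S x)) * H.c1 i k) = x := by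
  rw [lemmaG H i ρ hri hρ_add hρ_lin hρ (H.S x), H.S_leftinv]

lemma rho_sL (hri : ∀ a, i * a = i * H.sR (H.πR a))
    (hρ_add : ∀ x y, ρ (x + y) = ρ x + ρ y)
    (hρ_lin : ∀ l x, ρ (H.sL l * x) = l * ρ x)
    (hρ : (∑ k ∈ Finset.range (H.nL i), H.tL (ρ (H.c2 i k)) * H.c1 i k) = 1)
    (hnd₁ : Function.Injective (H.intMapL i)) (a : A) (l : L) :
    ρ (a * H.sL l) = ρ a * l := by
  have key : H.intMapL i ⟨fun a => ρ (a * H.sL l),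
      fun x y => by simp only [add_mul, hρ_add],
      fun m x => by
        show ρ (H.sL m * x * H.sL l) = m * ρ (x * H.sL l)
        rw [mul_assoc]; exact hρ_lin m (x * H.sL l)⟩ =
      H.intMapL i ⟨fun a => ρ a * l,
      fun x y => by simp only [hρ_add, add_mul],
      fun m x => by
        show ρ (H.sL m * x) * l = m * (ρ x * l)
        rw [hρ_lin, mul_assoc]⟩ := by
    show (∑ k ∈ Finset.range (H.nL i), H.tL (ρ (H.c2 i k * H.sL l)) * H.c1 i k) =
      ∑ k ∈ Finset.range (H.nL i), H.tL (ρ (H.c2 i k) * l) * H.c1 i k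
    rw [lemmaG H i ρ hri hρ_add hρ_lin hρ (H.sL l), aux_Sinv_sL]
    have : (∑ k ∈ Finset.range (H.nL i), H.tL (ρ (H.c2 i k) * l) * H.c1 i k)
        = H.tL l * ∑ k ∈ Finset.range (H.nL i), H.tL (ρ (H.c2 i k)) * H.c1 i k := by
      rw [Finset.mul_sum]
      exact Finset.sum_congr rfl fun k _ => by rw [H.tL_mul, mul_assoc]
    rw [this, hρ, mul_one]
  have := hnd₁ key
  have := congrArg Subtype.val this
  exact congrFun this a

lemma lemma_five (hri : ∀ a, i * a = i * H.sR (H.πR a))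
    (hρ_add : ∀ x y, ρ (x + y) = ρ x + ρ y)
    (hρ_lin : ∀ l x, ρ (H.sL l * x) = l * ρ x)
    (hρ : (∑ k ∈ Finset.range (H.nL i), H.tL (ρ (H.c2 i k)) * H.c1 i k) = 1)
    (hnd₂ : Function.Surjective (H.intMapR i)) (h : A) :
    (∑ k ∈ Finset.range (H.nL i), H.sL (ρ (h * H.S (H.c1 i k))) * H.c2 i k) = h := by
  obtain ⟨ψ, hψ⟩ := hnd₂ h
  have hψ' : (∑ m ∈ Finset.range (H.nL i), H.sL (ψ.1 (H.c1 i m)) * H.c2 i m) = h := hψ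
  have key : ∀ x : A, ρ (h * H.S x) = ψ.1 x := by
    intro x
    rw [← hψ']
    have expand : ((∑ m ∈ Finset.range (H.nL i), H.sL (ψ.1 (H.c1 i m)) * H.c2 i m) * H.S x)
        = ∑ m ∈ Finset.range (H.nL i), H.sL (ψ.1 (H.c1 i m)) * (H.c2 i m * H.S x) := by
      rw [Finset.sum_mul]
      exact Finset.sum_congr rfl fun m _ => mul_assoc _ _ _
    rw [expand, addf_sum ρ hρ_add]
    conv_rhs => rw [← lemmaGinv H i ρ hri hρ_add hρ_lin hρ x]
    rw [addf_sum ψ.1 ψ.2.1]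
    refine Finset.sum_congr rfl fun m _ => ?_
    rw [hρ_lin, ψ.2.2]
  calc (∑ k ∈ Finset.range (H.nL i), H.sL (ρ (h * H.S (H.c1 i k))) * H.c2 i k)
      = ∑ k ∈ Finset.range (H.nL i), H.sL (ψ.1 (H.c1 i k)) * H.c2 i k :=
        Finset.sum_congr rfl fun k _ => by rw [key]
    _ = h := hψ'

end ConvAux

/-- In a Hopf algebroid with non-degenerate right integral `i`, the two
closed expressions for the convolution product agree:
`t_L(ρ(h₍₂₎ S(k))) h₍₁₎ = s_L(ρ(h S(k₍₁₎))) k₍₂₎` for all `h, k ∈ H`, where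
`ρ = {}_Li⁻¹(1_H)`. -/
theorem convolution_two_forms_agree
    {A L R : Type u} [Ring A] [Ring L] [Ring R]
    (H : HopfAlgebroidData A L R) (i : A)
    (hri : ∀ a, i * a = i * H.sR (H.πR a))
    (hnd₁ : Function.Bijective (H.intMapL i))
    (hnd₂ : Function.Bijective (H.intMapR i))
    (ρ : A → L) (hρ_add : ∀ x y, ρ (x + y) = ρ x + ρ y)
    (hρ_lin : ∀ l x, ρ (H.sL l * x) = l * ρ x)
    (hρ : (∑ k ∈ Finset.range (H.nL i), H.tL (ρ (H.c2 i k)) * H.c1 i k) = 1) :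
    ∀ h k, (∑ j ∈ Finset.range (H.nL h), H.tL (ρ (H.c2 h j * H.S k)) * H.c1 h j) =
      (∑ j ∈ Finset.range (H.nL k), H.sL (ρ (h * H.S (H.c1 k j))) * H.c2 k j) := by
  intro h k
  have hrs : ∀ (a : A) (l : L), ρ (a * H.sL l) = ρ a * l :=
    rho_sL H i ρ hri hρ_add hρ_lin hρ hnd₁.1
  have hfive : (∑ m ∈ Finset.range (H.nL i), H.sL (ρ (h * H.S (H.c1 i m))) * H.c2 i m) = h :=
    lemma_five H i ρ hri hρ_add hρ_lin hρ hnd₂.2 h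
  have hGk : (∑ m ∈ Finset.range (H.nL i), H.tL (ρ (H.c2 i m * H.S k)) * H.c1 i m) = k :=
    lemmaGinv H i ρ hri hρ_add hρ_lin hρ k
  -- hypotheses for the balanced map F u v = tL (ρ (v * S k)) * u
  have hF1 : ∀ u u' v : A, H.tL (ρ (v * H.S k)) * (u + u') =
      H.tL (ρ (v * H.S k)) * u + H.tL (ρ (v * H.S k)) * u' := by
    intro u u' v; simp only [mul_add]
  have hF2 : ∀ u v v' : A, H.tL (ρ ((v + v') * H.S k)) * u =
      H.tL (ρ (v * H.S k)) * u + H.tL (ρ (v' * H.S k)) * u := by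
    intro u v v'; simp only [add_mul, hρ_add, H.tL_add]
  have hF3 : ∀ (l : L) (u v : A), H.tL (ρ (v * H.S k)) * (H.tL l * u) =
      H.tL (ρ (H.sL l * v * H.S k)) * u := by
    intro l u v; simp only [mul_assoc, hρ_lin, H.tL_mul]
  -- hypotheses for the balanced map F' u v = sL (ρ (h * S u)) * v
  have hF'1 : ∀ u u' v : A, H.sL (ρ (h * H.S (u + u'))) * v =
      H.sL (ρ (h * H.S u)) * v + H.sL (ρ (h * H.S u')) * v := by
    intro u u' v; simp only [H.S_add, mul_add, hρ_add, H.sL_add, add_mul]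
  have hF'2 : ∀ u v v' : A, H.sL (ρ (h * H.S u)) * (v + v') =
      H.sL (ρ (h * H.S u)) * v + H.sL (ρ (h * H.S u)) * v' := by
    intro u v v'; simp only [mul_add]
  have hF'3 : ∀ (l : L) (u v : A), H.sL (ρ (h * H.S (H.tL l * u))) * v =
      H.sL (ρ (h * H.S u)) * (H.sL l * v) := by
    intro l u v; simp only [aux_S_tL_mul, ← mul_assoc, hrs, H.sL_mul]
  have hL : (∑ j ∈ Finset.range (H.nL h), H.tL (ρ (H.c2 h j * H.S k)) * H.c1 h j) =
      ∑ m ∈ Finset.range (H.nL i), ∑ j ∈ Finset.range (H.nL (H.c1 i m)),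
        H.tL (ρ (H.c2 i m * H.S k)) *
          (H.sL (ρ (h * H.S (H.c1 (H.c1 i m) j))) * H.c2 (H.c1 i m) j) := by
    calc
      (∑ j ∈ Finset.range (H.nL h), H.tL (ρ (H.c2 h j * H.S k)) * H.c1 h j)
          = ∑ m ∈ Finset.range (H.nL i),
              ∑ j ∈ Finset.range (H.nL (H.sL (ρ (h * H.S (H.c1 i m))) * H.c2 i m)),
              H.tL (ρ (H.c2 (H.sL (ρ (h * H.S (H.c1 i m))) * H.c2 i m) j * H.S k)) *
                H.c1 (H.sL (ρ (h * H.S (H.c1 i m))) * H.c2 i m) j := by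
            conv_lhs => rw [← hfive]
            exact comulL_sum' H (fun u v => H.tL (ρ (v * H.S k)) * u) hF1 hF2
              (fun l u v => hF3 l u v) (Finset.range (H.nL i))
              (fun m => H.sL (ρ (h * H.S (H.c1 i m))) * H.c2 i m)
      _ = ∑ m ∈ Finset.range (H.nL i), ∑ j ∈ Finset.range (H.nL (H.c2 i m)),
              H.tL (ρ (H.c2 (H.c2 i m) j * H.S k)) *
                (H.sL (ρ (h * H.S (H.c1 i m))) * H.c1 (H.c2 i m) j) :=
            Finset.sum_congr rfl fun m _ =>
              comulL_sL' H (fun u v => H.tL (ρ (v * H.S k)) * u) hF1 hF2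
                (fun l u v => hF3 l u v) (ρ (h * H.S (H.c1 i m))) (H.c2 i m)
      _ = ∑ m ∈ Finset.range (H.nL i), ∑ j ∈ Finset.range (H.nL (H.c1 i m)),
              H.tL (ρ (H.c2 i m * H.S k)) *
                (H.sL (ρ (h * H.S (H.c1 (H.c1 i m) j))) * H.c2 (H.c1 i m) j) := by
            refine (H.comulL_coassoc
              (fun u v w => H.tL (ρ (w * H.S k)) * (H.sL (ρ (h * H.S u)) * v))
              ?_ ?_ ?_ ?_ ?_ i).symm
            · intro u u' v w
              simp only [H.S_add, mul_add, hρ_add, H.sL_add, add_mul]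
            · intro u v v' w
              simp only [mul_add]
            · intro u v w w'
              simp only [add_mul, hρ_add, H.tL_add]
            · intro l u v w
              simp only [aux_S_tL_mul, ← mul_assoc, hrs, H.sL_mul]
            · intro l u v w
              show H.tL (ρ (w * H.S k)) * (H.sL (ρ (h * H.S u)) * (H.tL l * v)) =
                H.tL (ρ (H.sL l * w * H.S k)) * (H.sL (ρ (h * H.S u)) * v)
              simp only [mul_assoc, hρ_lin, H.tL_mul]
              congr 1
              rw [← mul_assoc, H.commL, mul_assoc]
  have hR : (∑ j ∈ Finset.range (H.nL k), H.sL (ρ (h * H.S (H.c1 k j))) * H.c2 k j) =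
      ∑ m ∈ Finset.range (H.nL i), ∑ j ∈ Finset.range (H.nL (H.c1 i m)),
        H.tL (ρ (H.c2 i m * H.S k)) *
          (H.sL (ρ (h * H.S (H.c1 (H.c1 i m) j))) * H.c2 (H.c1 i m) j) := by
    calc
      (∑ j ∈ Finset.range (H.nL k), H.sL (ρ (h * H.S (H.c1 k j))) * H.c2 k j)
          = ∑ m ∈ Finset.range (H.nL i),
              ∑ j ∈ Finset.range (H.nL (H.tL (ρ (H.c2 i m * H.S k)) * H.c1 i m)),
              H.sL (ρ (h * H.S (H.c1 (H.tL (ρ (H.c2 i m * H.S k)) * H.c1 i m) j))) *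
                H.c2 (H.tL (ρ (H.c2 i m * H.S k)) * H.c1 i m) j := by
            conv_lhs => rw [← hGk]
            exact comulL_sum' H (fun u v => H.sL (ρ (h * H.S u)) * v)
              (fun u u' v => hF'1 u u' v) hF'2 (fun l u v => hF'3 l u v)
              (Finset.range (H.nL i)) (fun m => H.tL (ρ (H.c2 i m * H.S k)) * H.c1 i m)
      _ = ∑ m ∈ Finset.range (H.nL i), ∑ j ∈ Finset.range (H.nL (H.c1 i m)),
              H.sL (ρ (h * H.S (H.c1 (H.c1 i m) j))) *
                (H.tL (ρ (H.c2 i m * H.S k)) * H.c2 (H.c1 i m) j) :=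
            Finset.sum_congr rfl fun m _ =>
              comulL_tL' H (fun u v => H.sL (ρ (h * H.S u)) * v)
                (fun u u' v => hF'1 u u' v) hF'2 (fun l u v => hF'3 l u v)
                (ρ (H.c2 i m * H.S k)) (H.c1 i m)
      _ = ∑ m ∈ Finset.range (H.nL i), ∑ j ∈ Finset.range (H.nL (H.c1 i m)),
              H.tL (ρ (H.c2 i m * H.S k)) *
                (H.sL (ρ (h * H.S (H.c1 (H.c1 i m) j))) * H.c2 (H.c1 i m) j) := by
            refine Finset.sum_congr rfl fun m _ => Finset.sum_congr rfl fun j _ => ?_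
            rw [← mul_assoc, H.commL, mul_assoc]
  exact hL.trans hR.symm
end
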